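/- Let n ∈ ℕ, and write n = n₀ + ℓn₁ with 0 ≤ n₀ ≤ ℓ−1, ℓ odd, ℓ > 2. If n₁ = 0 or n₀ = ℓ−1, then the Weyl module V_n for U_q(sl₂) at a primitive ℓ-th root of unity q (defined over ℚ(q) with divided-power action E^{(j)}f_i = [i+j choose i]_q f_{i+j}, F^{(j)}f_i = [n−i+j choose j]_q f_{i−j}) is irreducible. -/

import Mathlib

/-!
A nonzero subspace `W` stable under the weight projections contains some `f_i`; then
`F^{(i)} f_i = [n choose i]_q f_0` and `E^{(b)} f_0 = f_b`, so `W = V_n` as soon as no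
`[n choose i]_q` vanishes. With `[m]! = ∏_{k=1}^{m} (X^k - 1)` one has
`[a + b choose a] [a]! [b]! = [a + b]!`, and `[m]!` vanishes at the primitive `ℓ`-th root
`q²` to order exactly `m / ℓ` (each `X^k - 1` is separable). Hence `[a + b choose a]` vanishes
there to order `(a + b) / ℓ - a / ℓ - b / ℓ`, the carry of `a + b` in the last base-`ℓ` digit,
and there is no carry when `n < ℓ` or `n ≡ -1 mod ℓ`.
-/

set_option synthInstance.maxHeartbeats 1000000
set_option maxHeartbeats 1000000
/-- The (unbalanced) Gaussian binomial polynomial, via the Pascal recursion. -/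
noncomputable def gaussPoly : ℕ → ℕ → Polynomial ℤ
  | _, 0 => 1
  | 0, _ + 1 => 0
  | n + 1, i + 1 => gaussPoly n i + Polynomial.X ^ (i + 1) * gaussPoly n (i + 1)

/-- The balanced `q`-binomial coefficient `[n choose i]_q`. -/
noncomputable def qbinom {k : Type} [Field k] (q : k) (n i : ℕ) : k :=
  q ^ (-(i * (n - i) : ℤ)) * Polynomial.eval₂ (Int.castRingHom k) (q ^ 2) (gaussPoly n i)

/-- The field `ℚ(q) ⊆ ℂ`. -/
noncomputable def Kfield (q : ℂ) : IntermediateField ℚ ℂ :=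
  IntermediateField.adjoin ℚ {q}

/-- `q` as an element of `ℚ(q)`. -/
noncomputable def qK (q : ℂ) : Kfield q :=
  ⟨q, IntermediateField.subset_adjoin ℚ {q} rfl⟩

/-- The divided power `E^{(j)}` on the Weyl module `V_n`:
`E^{(j)} f_i = [i+j choose i]_q f_{i+j}`. -/
noncomputable def Edp (q : ℂ) (n j : ℕ) :
    (Fin (n + 1) → Kfield q) →ₗ[Kfield q] (Fin (n + 1) → Kfield q) :=
  Matrix.toLin' (Matrix.of fun a b : Fin (n + 1) =>
    if (a : ℕ) = (b : ℕ) + j then qbinom (qK q) ((b : ℕ) + j) b else 0)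

/-- The divided power `F^{(j)}` on the Weyl module `V_n`:
`F^{(j)} f_i = [n−i+j choose j]_q f_{i−j}`. -/
noncomputable def Fdp (q : ℂ) (n j : ℕ) :
    (Fin (n + 1) → Kfield q) →ₗ[Kfield q] (Fin (n + 1) → Kfield q) :=
  Matrix.toLin' (Matrix.of fun a b : Fin (n + 1) =>
    if (b : ℕ) = (a : ℕ) + j then qbinom (qK q) (n - (b : ℕ) + j) j else 0)

open Polynomial Finset

-- `(X - 1)^m` times the usual `q`-factorial, which keeps it free of division.
noncomputable def qFactorial (m : ℕ) : ℤ[X] :=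
  ∏ k ∈ range m, (X ^ (k + 1) - 1)

lemma qFactorial_zero : qFactorial 0 = 1 := rfl

lemma qFactorial_succ (m : ℕ) : qFactorial (m + 1) = qFactorial m * (X ^ (m + 1) - 1) :=
  prod_range_succ _ _

lemma gaussPoly_zero_right (n : ℕ) : gaussPoly n 0 = 1 := by cases n <;> rfl

lemma gaussPoly_succ_succ (n i : ℕ) :
    gaussPoly (n + 1) (i + 1) = gaussPoly n i + X ^ (i + 1) * gaussPoly n (i + 1) := rfl

lemma gaussPoly_eq_zero_of_lt : ∀ {n i : ℕ}, n < i → gaussPoly n i = 0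
  | 0, _ + 1, _ => rfl
  | n + 1, i + 1, h => by
    rw [gaussPoly_succ_succ, gaussPoly_eq_zero_of_lt (by omega),
      gaussPoly_eq_zero_of_lt (by omega), mul_zero, add_zero]

theorem gaussPoly_add_mul_qFactorial_mul_qFactorial : ∀ a b : ℕ,
    gaussPoly (a + b) a * qFactorial a * qFactorial b = qFactorial (a + b)
  | 0, b => by simp [gaussPoly_zero_right, qFactorial_zero]
  | a + 1, 0 => by
    have ih := gaussPoly_add_mul_qFactorial_mul_qFactorial a 0
    simp only [add_zero, qFactorial_zero, mul_one] at ih ⊢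
    rw [gaussPoly_succ_succ, gaussPoly_eq_zero_of_lt a.lt_succ_self, qFactorial_succ]
    linear_combination (X ^ (a + 1) - 1 : ℤ[X]) * ih
  | a + 1, b + 1 => by
    have ih₁ := gaussPoly_add_mul_qFactorial_mul_qFactorial a (b + 1)
    have ih₂ := gaussPoly_add_mul_qFactorial_mul_qFactorial (a + 1) b
    rw [show a + (b + 1) = a + b + 1 by omega] at ih₁
    rw [show a + 1 + b = a + b + 1 by omega] at ih₂
    rw [show a + 1 + (b + 1) = a + b + 1 + 1 by omega, gaussPoly_succ_succ,
      qFactorial_succ (a + b + 1)]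
    rw [qFactorial_succ a] at ih₂ ⊢
    rw [qFactorial_succ b] at ih₁ ⊢
    linear_combination (X ^ (a + 1) - 1 : ℤ[X]) * ih₁ +
      X ^ (a + 1) * (X ^ (b + 1) - 1 : ℤ[X]) * ih₂
termination_by a b => a + b

section RootOfUnity

variable {K : Type*} [Field K]

lemma map_qFactorial_ne_zero (m : ℕ) : (qFactorial m).map (Int.castRingHom K) ≠ 0 := by
  simp only [qFactorial, Polynomial.map_prod, Polynomial.map_sub, Polynomial.map_pow, map_X,
    Polynomial.map_one, prod_ne_zero_iff]
  intro k _
  simpa using X_pow_sub_C_ne_zero k.succ_pos (1 : K)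

variable [CharZero K] {ℓ : ℕ} {ζ : K}

lemma rootMultiplicity_X_pow_sub_one (hζ : IsPrimitiveRoot ζ ℓ) {e : ℕ} (he : 0 < e) :
    rootMultiplicity ζ (X ^ e - 1 : K[X]) = if ℓ ∣ e then 1 else 0 := by
  have hne : (X ^ e - 1 : K[X]) ≠ 0 := by simpa using X_pow_sub_C_ne_zero he (1 : K)
  split_ifs with h
  · refine le_antisymm (rootMultiplicity_le_one_of_separable ?_ ζ) ?_
    · exact X_pow_sub_one_separable_iff.2 (Nat.cast_ne_zero.2 he.ne')
    · rw [Nat.one_le_iff_ne_zero, ← Nat.pos_iff_ne_zero, rootMultiplicity_pos hne]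
      simpa [sub_eq_zero] using (hζ.pow_eq_one_iff_dvd e).2 h
  · exact rootMultiplicity_eq_zero (by simpa [sub_eq_zero, hζ.pow_eq_one_iff_dvd] using h)

theorem rootMultiplicity_map_qFactorial (hζ : IsPrimitiveRoot ζ ℓ) (m : ℕ) :
    rootMultiplicity ζ ((qFactorial m).map (Int.castRingHom K)) = m / ℓ := by
  induction m with
  | zero => simp [qFactorial_zero]
  | succ m ih =>
    have hprod := map_qFactorial_ne_zero (K := K) (m + 1)
    rw [qFactorial_succ, Polynomial.map_mul] at hprod ⊢
    simp only [Polynomial.map_sub, Polynomial.map_pow, map_X, Polynomial.map_one] at hprod ⊢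
    rw [rootMultiplicity_mul hprod, ih, rootMultiplicity_X_pow_sub_one hζ m.succ_pos, Nat.succ_div]

theorem eval₂_gaussPoly_ne_zero (hζ : IsPrimitiveRoot ζ ℓ) {a b : ℕ} (h : a % ℓ + b % ℓ < ℓ) :
    (gaussPoly (a + b) a).eval₂ (Int.castRingHom K) ζ ≠ 0 := by
  set G := (gaussPoly (a + b) a).map (Int.castRingHom K)
  have hfac := congrArg (Polynomial.map (Int.castRingHom K))
    (gaussPoly_add_mul_qFactorial_mul_qFactorial a b)
  rw [Polynomial.map_mul, Polynomial.map_mul] at hfac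
  have hne : G * (qFactorial a).map (Int.castRingHom K) *
      (qFactorial b).map (Int.castRingHom K) ≠ 0 := hfac ▸ map_qFactorial_ne_zero (a + b)
  have hG : G ≠ 0 := left_ne_zero_of_mul (left_ne_zero_of_mul hne)
  have hmult := congrArg (rootMultiplicity ζ) hfac
  rw [rootMultiplicity_mul hne, rootMultiplicity_mul (left_ne_zero_of_mul hne),
    rootMultiplicity_map_qFactorial hζ, rootMultiplicity_map_qFactorial hζ,
    rootMultiplicity_map_qFactorial hζ, Nat.add_div_eq_of_add_mod_lt h] at hmult
  rw [← eval_map]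
  intro hroot
  have := (rootMultiplicity_pos hG).2 hroot
  omega

end RootOfUnity

theorem qbinom_ne_zero {K : Type} [Field K] [CharZero K] {ℓ : ℕ} (hodd : Odd ℓ) {q : K}
    (hq : IsPrimitiveRoot q ℓ) {a b : ℕ} (h : a % ℓ + b % ℓ < ℓ) : qbinom q (a + b) a ≠ 0 :=
  mul_ne_zero (zpow_ne_zero _ (hq.ne_zero hodd.pos.ne'))
    (eval₂_gaussPoly_ne_zero (hq.pow_of_coprime 2 (Nat.coprime_two_left.2 hodd)) h)

lemma qbinom_zero_right {K : Type} [Field K] (q : K) (m : ℕ) : qbinom q m 0 = 1 := by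
  simp [qbinom, gaussPoly_zero_right]

lemma mod_add_mod_lt_of_lt_or_mod_eq_pred {ℓ a b : ℕ} (hℓ : 0 < ℓ)
    (h : a + b < ℓ ∨ (a + b) % ℓ = ℓ - 1) : a % ℓ + b % ℓ < ℓ := by
  by_contra! hle
  have := Nat.add_mod_add_of_le_add_mod hle
  have := Nat.mod_le a ℓ
  have := Nat.mod_le b ℓ
  have := Nat.mod_lt a hℓ
  have := Nat.mod_lt b hℓ
  omega

lemma isPrimitiveRoot_qK {q : ℂ} {ℓ : ℕ} (hq : IsPrimitiveRoot q ℓ) : IsPrimitiveRoot (qK q) ℓ :=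
  hq.of_map_of_injective (f := algebraMap (Kfield q) ℂ) Subtype.val_injective

lemma Submodule.single_one_mem_of_single_mem {K ι : Type*} [Field K] [DecidableEq ι]
    {W : Submodule K (ι → K)} {i : ι} {c : K} (hc : c ≠ 0) (h : Pi.single i c ∈ W) :
    Pi.single i 1 ∈ W := by
  simpa [← Pi.single_smul, hc] using W.smul_mem c⁻¹ h

lemma Submodule.eq_top_of_forall_single_one_mem {K ι : Type*} [Field K] [Finite ι] [DecidableEq ι]
    {W : Submodule K (ι → K)} (h : ∀ i, Pi.single i 1 ∈ W) : W = ⊤ := by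
  rw [eq_top_iff, ← (Pi.basisFun K ι).span_eq, Submodule.span_le]
  rintro _ ⟨i, rfl⟩
  simpa using h i

lemma Fdp_single_one (q : ℂ) (n : ℕ) (i : Fin (n + 1)) :
    Fdp q n i (Pi.single i 1) = Pi.single 0 (qbinom (qK q) n i) := by
  ext a
  simp [Fdp, Matrix.mulVec_single, Pi.single_apply, Nat.sub_add_cancel i.is_le]

lemma Edp_single_zero (q : ℂ) (n : ℕ) (i : Fin (n + 1)) :
    Edp q n i (Pi.single 0 1) = Pi.single i 1 := by
  ext a
  simp [Edp, Matrix.mulVec_single, Pi.single_apply, Fin.val_inj, qbinom_zero_right]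

theorem stmt17_general (ℓ : ℕ) (hodd : Odd ℓ) (q : ℂ)
    (hq : IsPrimitiveRoot q ℓ) (n n₀ n₁ : ℕ)
    (hdecomp : n = n₀ + ℓ * n₁) (hn₀ : n₀ ≤ ℓ - 1)
    (hcase : n₁ = 0 ∨ n₀ = ℓ - 1) :
    ∀ W : Submodule (Kfield q) (Fin (n + 1) → Kfield q),
      (∀ j : ℕ, ∀ x ∈ W, Edp q n j x ∈ W) →
      (∀ j : ℕ, ∀ x ∈ W, Fdp q n j x ∈ W) →
      (∀ x ∈ W, ∀ i : Fin (n + 1), Pi.single i (x i) ∈ W) →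
      W = ⊥ ∨ W = ⊤ := by
  intro W hE hF hsingle
  refine or_iff_not_imp_left.2 fun hW => ?_
  obtain ⟨x, hxW, hx0⟩ := (Submodule.ne_bot_iff W).1 hW
  obtain ⟨i, hxi⟩ := Function.ne_iff.1 hx0
  have hfi : Pi.single i 1 ∈ W := Submodule.single_one_mem_of_single_mem hxi (hsingle x hxW i)
  have hn : i + (n - i) < ℓ ∨ (i + (n - i)) % ℓ = ℓ - 1 := by
    rw [Nat.add_sub_cancel' i.is_le]
    rcases hcase with rfl | rfl
    · have := hodd.pos
      left; omega
    · right
      rw [hdecomp, Nat.add_mul_mod_self_left, Nat.mod_eq_of_lt (Nat.sub_lt hodd.pos one_pos)]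
  have hbinom : qbinom (qK q) n i ≠ 0 := by
    have := qbinom_ne_zero hodd (isPrimitiveRoot_qK hq)
      (mod_add_mod_lt_of_lt_or_mod_eq_pred hodd.pos hn)
    rwa [Nat.add_sub_cancel' i.is_le] at this
  have hf0 : Pi.single 0 1 ∈ W :=
    Submodule.single_one_mem_of_single_mem hbinom (Fdp_single_one q n i ▸ hF i _ hfi)
  exact Submodule.eq_top_of_forall_single_one_mem fun b => Edp_single_zero q n b ▸ hE b _ hf0

/-- If `n = n₀ + ℓn₁` with `0 ≤ n₀ ≤ ℓ−1` and `n₁ = 0` or `n₀ = ℓ−1`, then the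
Weyl module `V_n` for `U_q(sl₂)` at a primitive `ℓ`-th root of unity `q`
(defined over `ℚ(q)`, with divided-power actions
`E^{(j)} f_i = [i+j choose i]_q f_{i+j}`, `F^{(j)} f_i = [n−i+j choose j]_q f_{i−j}`,
and `f_i` of weight `−n+2i`) is irreducible: the only subspaces invariant under
all `E^{(j)}`, `F^{(j)}` and compatible with the weight grading are `0` and `V_n`. -/
theorem stmt17 (ℓ : ℕ) (hℓ : 2 < ℓ) (hodd : Odd ℓ) (q : ℂ)
    (hq : IsPrimitiveRoot q ℓ) (n n₀ n₁ : ℕ)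
    (hdecomp : n = n₀ + ℓ * n₁) (hn₀ : n₀ ≤ ℓ - 1)
    (hcase : n₁ = 0 ∨ n₀ = ℓ - 1) :
    ∀ W : Submodule (Kfield q) (Fin (n + 1) → Kfield q),
      (∀ j : ℕ, ∀ x ∈ W, Edp q n j x ∈ W) →
      (∀ j : ℕ, ∀ x ∈ W, Fdp q n j x ∈ W) →
      (∀ x ∈ W, ∀ i : Fin (n + 1), Pi.single i (x i) ∈ W) →
      W = ⊥ ∨ W = ⊤ :=
  stmt17_general ℓ hodd q hq n n₀ n₁ hdecomp hn₀ hcase
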